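/- arXiv:math/0507522 — 6 statements merged into one kernel-verified Lean document; each statement's English description precedes it below -/
import Mathlib

section
/- For any z ∈ ℝ² and ρ > 0 with ρ + |z| ≤ 1, ∫_{|y| ≤ ρ} |log|y+z|| dy ≤ ∫_{|y| ≤ ρ} |log|y|| dy; i.e. the integral of |log| over a disc of radius ρ is maximized when the disc is centered at the origin. -/
/-!
After the translation `y ↦ y + z` the left side integrates `|log ‖y‖|` over the disc `S` of
radius `ρ` about `z`, the right side over the disc `T` of radius `ρ` about `0`; both lie in the
unit disc, where `|log ‖y‖|` decreases in `‖y‖`. On `S \ T` it is at most `|log ρ|`, on `T \ S`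
at least `|log ρ|`, and `S \ T`, `T \ S` have the same area, so moving the mass of `S \ T` onto
`T \ S` can only increase the integral.
-/

open MeasureTheory Real Metric Set Module
open scoped ENNReal

namespace Real

theorem abs_log_le_abs_log_of_le_one {a b : ℝ} (ha : 0 < a) (hab : a ≤ b) (hb : b ≤ 1) :
    |log b| ≤ |log a| := by
  rw [abs_of_nonpos (log_nonpos (ha.le.trans hab) hb),
    abs_of_nonpos (log_nonpos ha.le (hab.trans hb))]
  exact neg_le_neg (log_le_log ha hab)

theorem abs_log_le_rpow_add_rpow_neg {x t : ℝ} (hx : 0 ≤ x) (ht : 0 < t) :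
    |log x| ≤ (x ^ t + x ^ (-t)) / t := by
  rcases hx.eq_or_lt with rfl | hx
  · simp [zero_rpow ht.ne', zero_rpow (neg_ne_zero.2 ht.ne')]
  have hxt := rpow_nonneg hx.le t
  have hxt' := rpow_nonneg hx.le (-t)
  rw [add_div, abs_le]
  constructor
  · have hinv := log_le_rpow_div (inv_nonneg.2 hx.le) ht
    rw [log_inv, inv_rpow hx.le, ← rpow_neg hx.le] at hinv
    linarith [div_nonneg hxt ht.le]
  · linarith [log_le_rpow_div hx.le ht, div_nonneg hxt' ht.le]

end Real

section LogNorm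

variable {E : Type*} [NormedAddCommGroup E] [NormedSpace ℝ E] [FiniteDimensional ℝ E]
  [Nontrivial E] [MeasurableSpace E] [BorelSpace E] {μ : Measure E} [μ.IsAddHaarMeasure]

theorem locallyIntegrable_log_norm : LocallyIntegrable (fun x : E ↦ log ‖x‖) μ := by
  have hdim : 1 ≤ finrank ℝ E := finrank_pos
  have hα : (1 / 2 : ℝ) < finrank ℝ E := by
    have : (1 : ℝ) ≤ finrank ℝ E := by exact_mod_cast hdim
    linarith
  have hsing : LocallyIntegrable (fun x : E ↦ ‖x‖ ^ (-(1 / 2 : ℝ))) μ :=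
    locallyIntegrable_of_norm_le_rpow (C := 1) hdim hα
      (ae_of_all _ fun x ↦ by simp [abs_of_nonneg (rpow_nonneg (norm_nonneg x) _)])
      (continuous_norm.measurable.pow_const _).aestronglyMeasurable
  have hreg : LocallyIntegrable (fun x : E ↦ ‖x‖ ^ (1 / 2 : ℝ)) μ :=
    (continuous_norm.rpow_const fun _ ↦ Or.inr (by norm_num)).locallyIntegrable
  refine ((hreg.add hsing).smul (2 : ℝ)).mono
    continuous_norm.measurable.log.aestronglyMeasurable (ae_of_all _ fun x ↦ ?_)
  have hbound := abs_log_le_rpow_add_rpow_neg (norm_nonneg x) (by norm_num : (0 : ℝ) < 1 / 2)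
  simp only [Pi.smul_apply, Pi.add_apply, smul_eq_mul, norm_eq_abs]
  rw [abs_of_nonneg (by positivity : (0 : ℝ) ≤ 2 * (‖x‖ ^ (1 / 2 : ℝ) + ‖x‖ ^ (-(1 / 2) : ℝ)))]
  linarith

end LogNorm

section Rearrangement

variable {α : Type*} [MeasurableSpace α] {μ : Measure α} {s t : Set α} {f : α → ℝ} {c : ℝ}

theorem setIntegral_le_setIntegral_of_measure_eq (hs : MeasurableSet s) (ht : MeasurableSet t)
    (hμ : μ s = μ t) (hμs : μ s ≠ ∞) (hfs : IntegrableOn f s μ) (hft : IntegrableOn f t μ)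
    (h_out : ∀ᵐ x ∂μ, x ∈ s \ t → f x ≤ c) (h_in : ∀ᵐ x ∂μ, x ∈ t \ s → c ≤ f x) :
    ∫ x in s, f x ∂μ ≤ ∫ x in t, f x ∂μ := by
  have hμst : μ (s \ t) ≠ ∞ := measure_ne_top_of_subset sdiff_subset hμs
  have hμts : μ (t \ s) ≠ ∞ := measure_ne_top_of_subset sdiff_subset (hμ ▸ hμs)
  have hsdiff : μ (s \ t) = μ (t \ s) := measure_sdiff_symm hs.nullMeasurableSet
    ht.nullMeasurableSet hμ (measure_ne_top_of_subset inter_subset_left hμs)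
  rw [← integral_inter_add_sdiff ht hfs, ← integral_inter_add_sdiff hs hft, inter_comm]
  refine add_le_add_right ?_ _
  calc ∫ x in s \ t, f x ∂μ ≤ ∫ _ in s \ t, c ∂μ :=
        setIntegral_mono_on_ae (hfs.mono_set sdiff_subset) (integrableOn_const hμst)
          (hs.diff ht) h_out
    _ = ∫ _ in t \ s, c ∂μ := by
        rw [setIntegral_const, setIntegral_const, measureReal_def, measureReal_def, hsdiff]
    _ ≤ ∫ x in t \ s, f x ∂μ :=
        setIntegral_mono_on_ae (integrableOn_const hμts) (hft.mono_set sdiff_subset)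
          (ht.diff hs) h_in

end Rearrangement

/-- For `z ∈ ℝ²` and `ρ > 0` with `ρ + ‖z‖ ≤ 1`, the integral of
`|log ‖y + z‖|` over the disc of radius `ρ` about the origin is at most the integral
of `|log ‖y‖|` over the same disc: the integral is maximized when the disc is centered
at the origin. -/
theorem stmt8 (z : EuclideanSpace ℝ (Fin 2)) (ρ : ℝ) (hρ : 0 < ρ) (h : ρ + ‖z‖ ≤ 1) :
    (∫ y in Metric.closedBall (0 : EuclideanSpace ℝ (Fin 2)) ρ, |Real.log ‖y + z‖|)
      ≤ ∫ y in Metric.closedBall (0 : EuclideanSpace ℝ (Fin 2)) ρ, |Real.log ‖y‖| := by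
  have hT : closedBall (0 : EuclideanSpace ℝ (Fin 2)) ρ ⊆ closedBall 0 1 :=
    closedBall_subset_closedBall (by linarith [norm_nonneg z])
  have hS : closedBall z ρ ⊆ closedBall 0 1 :=
    closedBall_subset_closedBall' (by rwa [dist_zero_right])
  have hint : IntegrableOn (fun y : EuclideanSpace ℝ (Fin 2) ↦ |log ‖y‖|) (closedBall 0 1) :=
    (locallyIntegrable_log_norm.integrableOn_isCompact (isCompact_closedBall 0 1)).norm
  have htranslate : ∫ y in closedBall (0 : EuclideanSpace ℝ (Fin 2)) ρ, |log ‖y + z‖| =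
      ∫ y in closedBall z ρ, |log ‖y‖| := by
    simpa using (measurePreserving_add_right volume z).setIntegral_preimage_emb
      (measurableEmbedding_addRight z) (fun y ↦ |log ‖y‖|) (closedBall z ρ)
  rw [htranslate]
  refine setIntegral_le_setIntegral_of_measure_eq (c := |log ρ|) measurableSet_closedBall
    measurableSet_closedBall (Measure.addHaar_closedBall_center volume z ρ)
    measure_closedBall_lt_top.ne (hint.mono_set hS) (hint.mono_set hT) ?_ ?_
  · refine ae_of_all _ fun y ⟨hyS, hyT⟩ ↦ ?_
    rw [mem_closedBall_zero_iff, not_le] at hyT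
    exact abs_log_le_abs_log_of_le_one hρ hyT.le (mem_closedBall_zero_iff.1 (hS hyS))
  -- `y = 0` has to be discarded: there `log ‖y‖ = log 0 = 0`.
  · filter_upwards [compl_mem_ae_iff.2 (measure_singleton (0 : EuclideanSpace ℝ (Fin 2)))]
      with y hy0 ⟨hyT, _⟩
    exact abs_log_le_abs_log_of_le_one (norm_pos_iff.2 hy0) (mem_closedBall_zero_iff.1 hyT)
      (by linarith [norm_nonneg z])
end

section
/- Let u ∈ C²(ℝ²) solve Δu = 2πγ(u+a)V where γ > 0, a ∈ ℝ, and V ≥ 0 is continuous with compact support, and suppose u(x) = Z log|x| + O(|x|^{−1}) and ∇u(x) = Z x/|x|² + O(|x|^{−2}) as |x| → ∞. If Z = 0 then u ≡ 0, ∫|∇u|² = 0, and ∫(u+a)²V = 0. -/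
/-!
With `Z = 0` the asymptotics say `u = O(‖x‖⁻¹)` and `∇u = O(‖x‖⁻²)`, so the vector field
`(u + a) ∇u` is `O(‖x‖⁻²)` and its flux through the boundary of the square `[-r, r]²` tends to `0`.
Its divergence `‖∇u‖² + (u + a) Δu = ‖∇u‖² + 2πγ (u + a)² V` is continuous and nonnegative, so by
the divergence theorem its integral over the plane vanishes, hence it vanishes identically. Thus
`∇u ≡ 0` and `(u + a)² V ≡ 0`; `u` is constant and tends to `0` at infinity, so `u ≡ 0`.
-/

open MeasureTheory Real Filter Topology Set InnerProductSpace Laplacian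

theorem eq_zero_of_tendsto_setIntegral_of_nonneg {α ι : Type*} [TopologicalSpace α]
    [MeasurableSpace α] [OpensMeasurableSpace α] {μ : Measure α} [μ.IsOpenPosMeasure]
    {l : Filter ι} [l.NeBot] [l.IsCountablyGenerated] {φ : ι → Set α} (hφ : AECover μ l φ)
    {f : α → ℝ} (hf : Continuous f) (hf₀ : 0 ≤ f) (hfi : ∀ i, IntegrableOn f (φ i) μ)
    (hlim : Tendsto (fun i => ∫ x in φ i, f x ∂μ) l (𝓝 0)) : f = 0 := by
  have hint : Integrable f μ :=
    hφ.integrable_of_integral_tendsto_of_nonneg_ae 0 hfi (ae_of_all _ hf₀) hlim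
  have hzero : ∫ x, f x ∂μ = 0 :=
    tendsto_nhds_unique (hφ.integral_tendsto_of_countably_generated hint) hlim
  exact (hf.ae_eq_iff_eq μ continuous_const).1 ((integral_eq_zero_iff_of_nonneg hf₀ hint).1 hzero)

theorem aecover_Icc_const_atTop {ι : Type*} [Fintype ι] {μ : Measure (ι → ℝ)} :
    AECover μ atTop fun r : ℝ => Icc (fun _ : ι => -r) (fun _ => r) where
  ae_eventually_mem := ae_of_all _ fun x => (eventually_ge_atTop ‖x‖).mono fun r hr =>
    have hx : ∀ i, |x i| ≤ r := fun i => (norm_le_pi_norm x i).trans hr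
    ⟨fun i => (abs_le.1 (hx i)).1, fun i => (abs_le.1 (hx i)).2⟩
  measurableSet _ := measurableSet_Icc

theorem norm_le_norm_toLp_two {ι : Type*} [Fintype ι] (x : ι → ℝ) :
    ‖x‖ ≤ ‖WithLp.toLp 2 x‖ :=
  pi_norm_le_iff_of_nonneg (norm_nonneg _) |>.2 fun i => PiLp.norm_apply_le (WithLp.toLp 2 x) i

section Divergence

variable {n : ℕ}

theorem norm_setIntegral_face_le (g : (Fin (n + 1) → ℝ) → ℝ) (i : Fin (n + 1))
    {r t M : ℝ} (hr : 0 ≤ r) (ht : |t| = r) (hg : ∀ x, r ≤ ‖x‖ → |g x| ≤ M) :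
    ‖∫ x in Icc (fun _ : Fin n => -r) (fun _ => r), g (i.insertNth t x)‖ ≤ M * (2 * r) ^ n := by
  have hvol : volume.real (Icc (fun _ : Fin n => -r) (fun _ => r)) = (2 * r) ^ n := by
    rw [measureReal_def, Real.volume_Icc_pi_toReal fun _ => by linarith]
    simp [two_mul]
  refine (norm_setIntegral_le_of_norm_le_const isCompact_Icc.measure_lt_top fun x _ => ?_).trans_eq
    (by rw [hvol])
  refine hg _ ?_
  calc r = ‖(i.insertNth t x : Fin (n + 1) → ℝ) i‖ := by simp [ht]
    _ ≤ _ := norm_le_pi_norm _ i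

/-- The flux through the boundary of the cube `[-r, r]ⁿ⁺¹` is at most its area `O(rⁿ)` times
`K / rⁿ⁺¹`. -/
theorem tendsto_setIntegral_Icc_divergence_of_decay
    {f : Fin (n + 1) → (Fin (n + 1) → ℝ) → ℝ} (hf : ∀ i, ContDiff ℝ 1 (f i)) {K R : ℝ}
    (hdecay : ∀ i x, R ≤ ‖x‖ → |f i x| * ‖x‖ ^ (n + 1) ≤ K) :
    Tendsto (fun r : ℝ => ∫ x in Icc (fun _ => -r) (fun _ => r),
      ∑ i, fderiv ℝ (f i) x (Pi.single i 1)) atTop (𝓝 0) := by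
  have hbound : ∀ r, max R 1 ≤ r → ‖∫ x in Icc (fun _ => -r) (fun _ => r),
      ∑ i, fderiv ℝ (f i) x (Pi.single i 1)‖ ≤ 2 * (n + 1) * 2 ^ n * K / r := by
    intro r hr
    have hr₀ : 0 < r := one_pos.trans_le (le_of_max_le_right hr)
    have hface : ∀ i, ∀ x, r ≤ ‖x‖ → |f i x| ≤ K / r ^ (n + 1) := fun i x hx => by
      rw [le_div_iff₀ (by positivity)]
      exact (mul_le_mul_of_nonneg_left (pow_le_pow_left₀ hr₀.le hx _) (abs_nonneg _)).trans
        (hdecay i x ((le_of_max_le_left hr).trans hx))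
    rw [integral_divergence_of_hasFDerivAt_off_countable' _ _ (fun _ => neg_le_self hr₀.le) f
      (fun i x => fderiv ℝ (f i) x) ∅ countable_empty
      (fun i => (hf i).continuous.continuousOn)
      (fun x _ i => ((hf i).differentiable one_ne_zero x).hasFDerivAt)
      (Continuous.integrableOn_Icc (by fun_prop))]
    calc _ ≤ ∑ i : Fin (n + 1), (K / r ^ (n + 1) * (2 * r) ^ n + K / r ^ (n + 1) * (2 * r) ^ n) :=
          (norm_sum_le _ _).trans <| Finset.sum_le_sum fun i _ => (norm_sub_le _ _).trans <|
            add_le_add (norm_setIntegral_face_le _ i hr₀.le (abs_of_pos hr₀) (hface i))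
              (norm_setIntegral_face_le _ i hr₀.le (by simp [abs_of_pos hr₀]) (hface i))
      _ = 2 * (n + 1) * 2 ^ n * K / r := by
          simp only [Finset.sum_const, Finset.card_univ, Fintype.card_fin, nsmul_eq_mul]
          field_simp
          push_cast
          ring
  exact squeeze_zero_norm' ((eventually_ge_atTop (max R 1)).mono hbound)
    (tendsto_const_nhds.div_atTop tendsto_id)

theorem divergence_eq_zero_of_nonneg_of_decay
    {F : Fin (n + 1) → EuclideanSpace ℝ (Fin (n + 1)) → ℝ} (hF : ∀ i, ContDiff ℝ 1 (F i))
    {K R : ℝ} (hdecay : ∀ i y, R ≤ ‖y‖ → |F i y| * ‖y‖ ^ (n + 1) ≤ K)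
    (hdiv : ∀ y, 0 ≤ ∑ i, fderiv ℝ (F i) y (EuclideanSpace.single i 1))
    (y : EuclideanSpace ℝ (Fin (n + 1))) :
    ∑ i, fderiv ℝ (F i) y (EuclideanSpace.single i 1) = 0 := by
  let e := (EuclideanSpace.equiv (Fin (n + 1)) ℝ).symm
  have hfderiv : ∀ i x, fderiv ℝ (F i ∘ e) x (Pi.single i 1) =
      fderiv ℝ (F i) (e x) (EuclideanSpace.single i 1) := fun i x => by
    simp [e, e.comp_right_fderiv]
  have hcont : Continuous fun y => ∑ i, fderiv ℝ (F i) y (EuclideanSpace.single i 1) := by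
    have := fun i => (hF i).continuous_fderiv one_ne_zero
    fun_prop
  have hlim := tendsto_setIntegral_Icc_divergence_of_decay (f := fun i => F i ∘ e)
    (fun i => (hF i).comp e.contDiff) fun i x hx =>
      (mul_le_mul_of_nonneg_left (pow_le_pow_left₀ (norm_nonneg _) (norm_le_norm_toLp_two x) _)
        (abs_nonneg _)).trans (hdecay i _ (hx.trans (norm_le_norm_toLp_two x)))
  simp only [hfderiv] at hlim
  have hzero := eq_zero_of_tendsto_setIntegral_of_nonneg aecover_Icc_const_atTop
    (hcont.comp e.continuous) (fun x => hdiv (e x))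
    (fun r => (hcont.comp e.continuous).integrableOn_Icc) hlim
  simpa [e] using congr_fun hzero (WithLp.ofLp y)

end Divergence

section Green

variable {ι : Type*} [Fintype ι] {u : EuclideanSpace ℝ ι → ℝ}

theorem fderiv_apply_single_eq_gradient [DecidableEq ι] (y : EuclideanSpace ℝ ι) (i : ι) :
    fderiv ℝ u y (EuclideanSpace.single i 1) = gradient u y i := by
  rw [← toDual_gradient, toDual_apply_apply, EuclideanSpace.inner_single_right]
  simp

theorem laplacian_eq_sum_iteratedFDeriv_single [DecidableEq ι] (y : EuclideanSpace ℝ ι) :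
    Δ u y =
      ∑ i, iteratedFDeriv ℝ 2 u y ![EuclideanSpace.single i 1, EuclideanSpace.single i 1] := by
  simp [laplacian_eq_iteratedFDeriv_orthonormalBasis u (EuclideanSpace.basisFun ι ℝ)]

theorem contDiff_add_const_mul_fderiv_apply (hu : ContDiff ℝ 2 u) (a : ℝ)
    (v : EuclideanSpace ℝ ι) : ContDiff ℝ 1 fun y => (u y + a) * fderiv ℝ u y v :=
  ((hu.of_le one_le_two).add contDiff_const).mul
    ((hu.fderiv_right le_rfl).clm_apply contDiff_const)

theorem fderiv_add_const_mul_fderiv_apply (hu : ContDiff ℝ 2 u) (a : ℝ)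
    (y v : EuclideanSpace ℝ ι) :
    fderiv ℝ (fun z => (u z + a) * fderiv ℝ u z v) y v =
      fderiv ℝ u y v ^ 2 + (u y + a) * iteratedFDeriv ℝ 2 u y ![v, v] := by
  have hu₁ : Differentiable ℝ u := hu.differentiable two_ne_zero
  have hDu : Differentiable ℝ (fderiv ℝ u) := (hu.fderiv_right le_rfl).differentiable one_ne_zero
  rw [fderiv_fun_mul ((hu₁ y).add_const a) ((hDu y).clm_apply (differentiableAt_const v)),
    fderiv_clm_apply (hDu y) (differentiableAt_const v), iteratedFDeriv_two_apply]
  simp only [fderiv_fun_const, Pi.zero_apply, ContinuousLinearMap.comp_zero, zero_add,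
    fderiv_add_const, add_apply, smul_apply, ContinuousLinearMap.flip_apply, smul_eq_mul,
    Matrix.cons_val_zero, Matrix.cons_val_one]
  ring

/-- Green's first identity in divergence form: `div ((u + a) ∇u) = ‖∇u‖² + (u + a) Δu`. -/
theorem sum_fderiv_add_const_mul_fderiv_single [DecidableEq ι] (hu : ContDiff ℝ 2 u) (a : ℝ)
    (y : EuclideanSpace ℝ ι) :
    ∑ i, fderiv ℝ (fun z => (u z + a) * fderiv ℝ u z (EuclideanSpace.single i 1)) y
        (EuclideanSpace.single i 1) = ‖gradient u y‖ ^ 2 + (u y + a) * Δ u y := by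
  rw [Finset.sum_congr rfl fun i _ => fderiv_add_const_mul_fderiv_apply hu a y _,
    Finset.sum_add_distrib, ← Finset.mul_sum, ← laplacian_eq_sum_iteratedFDeriv_single,
    EuclideanSpace.norm_sq_eq]
  simp [fderiv_apply_single_eq_gradient]

theorem abs_add_const_mul_fderiv_single_mul_sq_le [DecidableEq ι] {a C : ℝ}
    {y : EuclideanSpace ℝ ι} (i : ι) (hu : |u y| ≤ C / ‖y‖)
    (hgrad : ‖gradient u y‖ ≤ C / ‖y‖ ^ 2) (hy : 1 ≤ ‖y‖) :
    |(u y + a) * fderiv ℝ u y (EuclideanSpace.single i 1)| * ‖y‖ ^ 2 ≤ (|a| + |C|) * C := by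
  have hy₀ : 0 < ‖y‖ := one_pos.trans_le hy
  have hu' : |u y + a| ≤ |a| + |C| := by
    have : |u y| ≤ |C| := hu.trans <|
      (div_le_div_of_nonneg_right (le_abs_self C) hy₀.le).trans (div_le_self (abs_nonneg C) hy)
    linarith [abs_add_le (u y) a]
  have hgrad' : |fderiv ℝ u y (EuclideanSpace.single i 1)| * ‖y‖ ^ 2 ≤ C := by
    rw [fderiv_apply_single_eq_gradient, ← le_div_iff₀ (by positivity)]
    exact (PiLp.norm_apply_le (gradient u y) i).trans hgrad
  rw [abs_mul, mul_assoc]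
  exact mul_le_mul hu' hgrad' (by positivity) (by positivity)

end Green

theorem eq_zero_of_fderiv_eq_zero_of_tendsto_cocompact {E : Type*} [NormedAddCommGroup E]
    [NormedSpace ℝ E] [Nontrivial E] {f : E → ℝ} (hf : Differentiable ℝ f)
    (hf' : ∀ x, fderiv ℝ f x = 0) (hlim : Tendsto f (cocompact E) (𝓝 0)) (x : E) : f x = 0 := by
  have hconst : f = fun _ => f x := funext fun y => is_const_of_fderiv_eq_zero hf hf' y x
  rw [hconst] at hlim
  exact tendsto_nhds_unique tendsto_const_nhds hlim

theorem stmt12_general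
    (u V : EuclideanSpace ℝ (Fin 2) → ℝ) (γ a Z : ℝ)
    (hu : ContDiff ℝ 2 u)
    (hγ : 0 < γ)
    (hVnonneg : ∀ x, 0 ≤ V x)
    (hlap : ∀ x, (∑ i : Fin 2,
        iteratedFDeriv ℝ 2 u x ![EuclideanSpace.single i 1, EuclideanSpace.single i 1])
      = 2 * Real.pi * γ * (u x + a) * V x)
    (hasymp : ∃ C R : ℝ, ∀ x, R ≤ ‖x‖ →
      |u x - Z * Real.log ‖x‖| ≤ C / ‖x‖ ∧
      ‖gradient u x - (Z / ‖x‖ ^ 2) • x‖ ≤ C / ‖x‖ ^ 2)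
    (hZ0 : Z = 0) :
    (∀ x, u x = 0) ∧
    (∫ x, ‖gradient u x‖ ^ 2) = 0 ∧
    (∫ x, (u x + a) ^ 2 * V x) = 0 := by
  subst hZ0
  obtain ⟨C, R, hCR⟩ := hasymp
  simp only [zero_mul, sub_zero, zero_div, zero_smul] at hCR
  have hsource : ∀ y, (u y + a) * Δ u y = 2 * π * γ * ((u y + a) ^ 2 * V y) := fun y => by
    rw [laplacian_eq_sum_iteratedFDeriv_single, hlap]
    ring
  have hsource_nonneg : ∀ y, 0 ≤ (u y + a) * Δ u y := fun y => by
    rw [hsource]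
    exact mul_nonneg (by positivity) (mul_nonneg (sq_nonneg _) (hVnonneg y))
  have hdiv : ∀ y, ‖gradient u y‖ ^ 2 + (u y + a) * Δ u y = 0 := fun y => by
    rw [← sum_fderiv_add_const_mul_fderiv_single hu]
    refine divergence_eq_zero_of_nonneg_of_decay (n := 1)
      (fun i => contDiff_add_const_mul_fderiv_apply hu a _) (R := max R 1)
      (fun i y hy => abs_add_const_mul_fderiv_single_mul_sq_le i
        (hCR y (le_of_max_le_left hy)).1 (hCR y (le_of_max_le_left hy)).2 (le_of_max_le_right hy))
      (fun y => ?_) y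
    rw [sum_fderiv_add_const_mul_fderiv_single hu]
    exact add_nonneg (sq_nonneg _) (hsource_nonneg y)
  have hgrad : ∀ y, gradient u y = 0 := fun y => by
    simpa using ((add_eq_zero_iff_of_nonneg (sq_nonneg _) (hsource_nonneg y)).1 (hdiv y)).1
  have hsource_zero : ∀ y, (u y + a) ^ 2 * V y = 0 := fun y => by
    have := ((add_eq_zero_iff_of_nonneg (sq_nonneg _) (hsource_nonneg y)).1 (hdiv y)).2
    rw [hsource] at this
    simpa [hγ.ne', pi_ne_zero] using this
  have hlim : Tendsto u (cocompact _) (𝓝 0) :=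
    squeeze_zero_norm' ((tendsto_norm_cocompact_atTop.eventually_ge_atTop R).mono
      fun y hy => (hCR y hy).1) (tendsto_const_nhds.div_atTop tendsto_norm_cocompact_atTop)
  refine ⟨eq_zero_of_fderiv_eq_zero_of_tendsto_cocompact (hu.differentiable two_ne_zero)
    (fun y => by rw [← toDual_gradient, hgrad, map_zero]) hlim, by simp [hgrad],
    by simp [hsource_zero]⟩

/-- Let `u ∈ C²(ℝ²)` solve `Δu = 2πγ(u+a)V` with `γ > 0`, `a ∈ ℝ`,
`V ≥ 0` continuous with compact support, and suppose
`u(x) = Z log ‖x‖ + O(‖x‖⁻¹)` and `∇u(x) = Z x/‖x‖² + O(‖x‖⁻²)` at infinity,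
where `Z = γ ∫ (u+a)V`. If `Z = 0` then `u ≡ 0`, `∫ ‖∇u‖² = 0` and `∫ (u+a)² V = 0`. -/
theorem stmt12
    (u V : EuclideanSpace ℝ (Fin 2) → ℝ) (γ a Z : ℝ)
    (hu : ContDiff ℝ 2 u)
    (hγ : 0 < γ)
    (hVcont : Continuous V) (hVsupp : HasCompactSupport V)
    (hVnonneg : ∀ x, 0 ≤ V x)
    (hZ : Z = γ * ∫ x, (u x + a) * V x)
    (hlap : ∀ x, (∑ i : Fin 2,
        iteratedFDeriv ℝ 2 u x ![EuclideanSpace.single i 1, EuclideanSpace.single i 1])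
      = 2 * Real.pi * γ * (u x + a) * V x)
    (hasymp : ∃ C R : ℝ, ∀ x, R ≤ ‖x‖ →
      |u x - Z * Real.log ‖x‖| ≤ C / ‖x‖ ∧
      ‖gradient u x - (Z / ‖x‖ ^ 2) • x‖ ≤ C / ‖x‖ ^ 2)
    (hZ0 : Z = 0) :
    (∀ x, u x = 0) ∧
    (∫ x, ‖gradient u x‖ ^ 2) = 0 ∧
    (∫ x, (u x + a) ^ 2 * V x) = 0 :=
  stmt12_general u V γ a Z hu hγ hVnonneg hlap hasymp hZ0
end

section
/- Let u ∈ C²(ℝ²) satisfy Δu = 2πγ(u+a)V with γ > 0, V ≥ 0 continuous of compact support, and u(x) = Z log|x| + O(|x|^{−1}) at infinity with Z > 0. Then u + a ≥ 0 everywhere on ℝ². -/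
/-!
The asymptotics force `u + a → ∞` at infinity, so `{u + a < 0}` is bounded, and on it
`Δ(u + a) = 2πγ (u + a) V ≤ 0`. A function that is superharmonic wherever it is negative and is
negative only on a bounded set is nonnegative: subtracting `ε‖x‖²` makes the Laplacian strictly
negative, so the perturbed function attains its minimum over the compact set `{u + a ≤ 0}` where
`u + a = 0`, and this bounds `u + a` from below by `-ε R²` for every `ε > 0`.
-/

open Real Filter Topology Bornology Laplacian InnerProductSpace Module

theorem IsLocalMin.deriv_deriv_nonneg {f : ℝ → ℝ} {x : ℝ} (h : IsLocalMin f x)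
    (hc : ContinuousAt f x) : 0 ≤ deriv (deriv f) x := by
  by_contra! hneg
  have hmax : IsLocalMax f x := isLocalMax_of_deriv_deriv_neg hneg h.deriv_eq_zero hc
  have hconst : f =ᶠ[𝓝 x] fun _ => f x := (h.and hmax).mono fun y hy => le_antisymm hy.2 hy.1
  have hzero : deriv (deriv f) x = 0 := by
    rw [hconst.deriv.deriv_eq]
    simp
  exact hneg.ne hzero

theorem tendsto_cobounded_atTop_of_abs_sub_mul_log_norm_le {E : Type*} [NormedAddCommGroup E]
    {f : E → ℝ} {Z C R : ℝ}
    (hZ : 0 < Z) (hf : ∀ x, R ≤ ‖x‖ → |f x - Z * log ‖x‖| ≤ C / ‖x‖) :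
    Tendsto f (cobounded E) atTop := by
  have hnorm : Tendsto (‖·‖) (cobounded E) atTop := tendsto_norm_cobounded_atTop
  have hlower : Tendsto (fun x => Z * log ‖x‖ + -|C|) (cobounded E) atTop :=
    tendsto_atTop_add_const_right _ _ ((tendsto_log_atTop.comp hnorm).const_mul_atTop hZ)
  refine tendsto_atTop_mono' _ ?_ hlower
  filter_upwards [hnorm.eventually_ge_atTop (max R 1)] with x hx
  have hx1 : 1 ≤ ‖x‖ := le_of_max_le_right hx
  have hC : C / ‖x‖ ≤ |C| :=
    (div_le_div_of_nonneg_right (le_abs_self C) (norm_nonneg x)).trans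
      (div_le_self (abs_nonneg C) hx1)
  linarith [(abs_le.1 (hf x (le_of_max_le_left hx))).1]

section NormedSpace

variable {E : Type*} [NormedAddCommGroup E] [NormedSpace ℝ E]

theorem ContDiff.hasDerivAt_fderiv_apply_line {F : Type*} [NormedAddCommGroup F]
    [NormedSpace ℝ F] {f : E → F} (hf : ContDiff ℝ 2 f) (p e : E) :
    HasDerivAt (fun t : ℝ => fderiv ℝ f (p + t • e) e) (iteratedFDeriv ℝ 2 f p ![e, e]) 0 := by
  have hline : HasDerivAt (fun t : ℝ => p + t • e) e 0 := by
    simpa using ((hasDerivAt_id (0 : ℝ)).smul_const e).const_add p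
  have hF : HasFDerivAt (fderiv ℝ f) (fderiv ℝ (fderiv ℝ f) p) p :=
    ((hf.fderiv_right (m := 1) (by norm_num)).differentiable one_ne_zero p).hasFDerivAt
  have := (hF.comp_hasDerivAt_of_eq 0 hline (by simp)).clm_apply (hasDerivAt_const 0 e)
  simpa [iteratedFDeriv_two_apply] using this

theorem IsLocalMin.iteratedFDeriv_two_nonneg {f : E → ℝ} {p : E} (h : IsLocalMin f p)
    (hf : ContDiff ℝ 2 f) (e : E) : 0 ≤ iteratedFDeriv ℝ 2 f p ![e, e] := by
  have hline : Continuous fun t : ℝ => p + t • e := by fun_prop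
  have hmin : IsLocalMin (fun t : ℝ => f (p + t • e)) 0 :=
    IsLocalMin.comp_continuous (g := fun t : ℝ => p + t • e) (by simpa using h)
      hline.continuousAt
  have hderiv : deriv (fun t : ℝ => f (p + t • e)) = fun t => fderiv ℝ f (p + t • e) e := by
    funext t
    exact ((hf.differentiable two_ne_zero _).hasFDerivAt.comp_hasDerivAt t
      (by simpa using ((hasDerivAt_id t).smul_const e).const_add p)).deriv
  have := hmin.deriv_deriv_nonneg (hf.continuous.comp hline).continuousAt
  rwa [hderiv, (hf.hasDerivAt_fderiv_apply_line p e).deriv] at this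

end NormedSpace

section InnerProductSpace

variable {E : Type*} [NormedAddCommGroup E] [InnerProductSpace ℝ E]

theorem iteratedFDeriv_two_norm_sq_apply (x e : E) :
    iteratedFDeriv ℝ 2 (fun y : E => ‖y‖ ^ 2) x ![e, e] = 2 * ‖e‖ ^ 2 := by
  rw [iteratedFDeriv_two_apply, fderiv_norm_sq, ← FunLike.coe_smul,
    ContinuousLinearMap.fderiv]
  simp only [Matrix.cons_val_zero, Matrix.cons_val_one, smul_apply, nsmul_eq_mul, Nat.cast_ofNat]
  rw [innerSL_apply_apply, real_inner_self_eq_norm_sq]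

variable [FiniteDimensional ℝ E]

theorem laplacian_norm_sq : Δ (fun x : E => ‖x‖ ^ 2) = fun _ => 2 * (finrank ℝ E : ℝ) := by
  rw [laplacian_eq_iteratedFDeriv_stdOrthonormalBasis]
  ext x
  simp [iteratedFDeriv_two_norm_sq_apply, (stdOrthonormalBasis ℝ E).orthonormal.1, mul_comm]

theorem IsLocalMin.laplacian_nonneg {f : E → ℝ} {p : E} (h : IsLocalMin f p)
    (hf : ContDiff ℝ 2 f) : 0 ≤ Δ f p := by
  rw [laplacian_eq_iteratedFDeriv_stdOrthonormalBasis]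
  exact Finset.sum_nonneg fun i _ => h.iteratedFDeriv_two_nonneg hf _

variable [Nontrivial E]

theorem neg_mul_sq_le_of_laplacian_nonpos_of_subset_closedBall {w : E → ℝ}
    (hw : ContDiff ℝ 2 w) {R : ℝ} (hR : {x | w x < 0} ⊆ Metric.closedBall 0 R)
    (hΔ : ∀ x, w x < 0 → Δ w x ≤ 0) {ε : ℝ} (hε : 0 < ε) (x : E) : -(ε * R ^ 2) ≤ w x := by
  rcases le_or_gt 0 (w x) with hx | hx
  · nlinarith
  set K := Metric.closedBall 0 R ∩ {x | w x ≤ 0}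
  have hK : IsCompact K :=
    (isCompact_closedBall 0 R).inter_right (isClosed_le hw.continuous continuous_const)
  have hxK : x ∈ K := ⟨hR hx, hx.le⟩
  have hq : ContDiff ℝ 2 (ε • fun y : E => ‖y‖ ^ 2) := (contDiff_norm_sq ℝ).const_smul ε
  set v := w - ε • fun y : E => ‖y‖ ^ 2
  obtain ⟨p, hpK, hpmin⟩ := hK.exists_isMinOn ⟨x, hxK⟩ (hw.sub hq).continuous.continuousOn
  have hp : w p = 0 := by
    refine le_antisymm hpK.2 (not_lt.1 fun hneg => ?_)
    have hloc : IsLocalMin v p := by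
      filter_upwards [(isOpen_lt hw.continuous continuous_const).mem_nhds hneg] with y hy
      exact hpmin ⟨hR hy, hy.le⟩
    have hΔv := hloc.laplacian_nonneg (hw.sub hq)
    rw [hw.contDiffAt.laplacian_sub hq.contDiffAt,
      laplacian_smul ε (contDiff_norm_sq ℝ).contDiffAt, laplacian_norm_sq] at hΔv
    have hdim : (0 : ℝ) < finrank ℝ E := Nat.cast_pos.2 finrank_pos
    simp only [smul_eq_mul] at hΔv
    nlinarith [hΔ p hneg]
  have hpR : ‖p‖ ≤ R := mem_closedBall_zero_iff.1 hpK.1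
  calc -(ε * R ^ 2) ≤ -(ε * ‖p‖ ^ 2) := by gcongr
    _ = v p := by simp [v, hp]
    _ ≤ v x := hpmin hxK
    _ ≤ w x := by simp only [v, Pi.sub_apply, Pi.smul_apply, smul_eq_mul]; nlinarith [hε]

theorem nonneg_of_laplacian_nonpos_of_isBounded {w : E → ℝ}
    (hw : ContDiff ℝ 2 w) (hbdd : IsBounded {x | w x < 0})
    (hΔ : ∀ x, w x < 0 → Δ w x ≤ 0) (x : E) : 0 ≤ w x := by
  obtain ⟨R, hRpos, hsub⟩ := hbdd.subset_closedBall_lt 0 0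
  refine le_of_forall_pos_le_add fun δ hδ => ?_
  have := neg_mul_sq_le_of_laplacian_nonpos_of_subset_closedBall hw hsub hΔ
    (div_pos hδ (pow_pos hRpos 2)) x
  rw [div_mul_cancel₀ δ (pow_pos hRpos 2).ne'] at this
  linarith

end InnerProductSpace

theorem stmt13_general
    (u V : EuclideanSpace ℝ (Fin 2) → ℝ) (γ a Z : ℝ)
    (hu : ContDiff ℝ 2 u)
    (hγ : 0 < γ)
    (hVnonneg : ∀ x, 0 ≤ V x)
    (hlap : ∀ x, (∑ i : Fin 2,
        iteratedFDeriv ℝ 2 u x ![EuclideanSpace.single i 1, EuclideanSpace.single i 1])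
      = 2 * Real.pi * γ * (u x + a) * V x)
    (hasymp : ∃ C R : ℝ, ∀ x, R ≤ ‖x‖ →
      |u x - Z * Real.log ‖x‖| ≤ C / ‖x‖)
    (hZpos : 0 < Z) :
    ∀ x, 0 ≤ u x + a := by
  obtain ⟨C, R, hCR⟩ := hasymp
  have hgrowth := tendsto_cobounded_atTop_of_abs_sub_mul_log_norm_le hZpos hCR
  have hbdd : IsBounded {x | u x + a < 0} := by
    refine isBounded_def.2 ?_
    filter_upwards [hgrowth.eventually_ge_atTop (-a)] with x hx
    exact fun hneg : u x + a < 0 => by linarith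
  refine nonneg_of_laplacian_nonpos_of_isBounded (hu.add contDiff_const) hbdd fun x hx => ?_
  have hΔ : Δ (fun y => u y + a) x = Δ u x := by
    rw [show (fun y => u y + a) = u + fun _ => a from rfl,
      hu.contDiffAt.laplacian_add contDiffAt_const, laplacian_const, Pi.zero_apply, add_zero]
  rw [hΔ, laplacian_eq_iteratedFDeriv_orthonormalBasis u (EuclideanSpace.basisFun (Fin 2) ℝ)]
  simp only [EuclideanSpace.basisFun_apply, hlap]
  exact mul_nonpos_of_nonpos_of_nonneg
    (mul_nonpos_of_nonneg_of_nonpos (by positivity) hx.le) (hVnonneg x)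

/-- Let `u ∈ C²(ℝ²)` satisfy `Δu = 2πγ(u+a)V` with `γ > 0`,
`V ≥ 0` continuous of compact support, and `u(x) = Z log ‖x‖ + O(‖x‖⁻¹)` at infinity
with `Z = γ ∫ (u+a)V > 0`. Then `u + a ≥ 0` everywhere on `ℝ²`. -/
theorem stmt13
    (u V : EuclideanSpace ℝ (Fin 2) → ℝ) (γ a Z : ℝ)
    (hu : ContDiff ℝ 2 u)
    (hγ : 0 < γ)
    (hVcont : Continuous V) (hVsupp : HasCompactSupport V)
    (hVnonneg : ∀ x, 0 ≤ V x)
    (hZ : Z = γ * ∫ x, (u x + a) * V x)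
    (hlap : ∀ x, (∑ i : Fin 2,
        iteratedFDeriv ℝ 2 u x ![EuclideanSpace.single i 1, EuclideanSpace.single i 1])
      = 2 * Real.pi * γ * (u x + a) * V x)
    (hasymp : ∃ C R : ℝ, ∀ x, R ≤ ‖x‖ →
      |u x - Z * Real.log ‖x‖| ≤ C / ‖x‖)
    (hZpos : 0 < Z) :
    ∀ x, 0 ≤ u x + a :=
  stmt13_general u V γ a Z hu hγ hVnonneg hlap hasymp hZpos
end

section
/- Fix R₀ > 0. Let u^ε solve u^ε(εx) = (τ/2π) ∫ log(ε|x−y|) (u^ε(εy)|log ε|^{−1} + 1) V(y) dy with V ≥ 0 supported in B_{R₀}(0), ∫V = 1, τ > 0, and suppose u^ε ≥ −|log ε| and Λ_ε := (τ/2π)∫(u^ε(εy)|log ε|^{−1}+1)V(y)dy stays bounded. Then for every k > 0, sup_{|x| ≤ k} | u^ε(εx)|log ε|^{−1} + Λ_ε | → 0 as ε → 0. -/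
/-!
Write `L = |log ε|`, `c = τ / 2π` and `f = (u ε (ε ·) / L + 1) V ≥ 0`, supported in `B_{R₀}`.
Splitting `log (ε ‖x - y‖) = -L + log ‖x - y‖` turns the equation into
`u ε (ε x) / L + Λ ε = (c / L) ∫ log ‖x - y‖ f y dy`.
On the support of `V` the kernel `log (ε ‖x - y‖)` is at most `log (2 R₀)`, so the equation
itself gives `u ε (ε x) ≤ max 0 (log (2 R₀)) Λ ε` there; hence `f` is bounded uniformly in `ε`.
As `log ‖·‖` is locally integrable, the right-hand side is `O(1 / L)` uniformly for `‖x‖ ≤ k`.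
-/

open MeasureTheory Real Filter Set Topology

theorem Real.abs_log_le_mul_rpow_neg_half {t r : ℝ} (ht : 0 ≤ t) (htr : t ≤ r) :
    |log t| ≤ 2 * (r + 1) * t ^ (-(1 / 2) : ℝ) := by
  rcases ht.eq_or_lt with rfl | ht
  · simp
  have hpow : t ^ (1 / 2 : ℝ) = t * t ^ (-(1 / 2) : ℝ) := by
    rw [← rpow_one_add' ht.le (by norm_num)]; norm_num
  have hupper : log t ≤ 2 * t ^ (1 / 2 : ℝ) := by
    have := log_le_rpow_div ht.le (by norm_num : (0 : ℝ) < 1 / 2)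
    linarith
  have hlower : -log t ≤ 2 * t ^ (-(1 / 2) : ℝ) := by
    have := log_le_rpow_div (inv_nonneg.2 ht.le) (by norm_num : (0 : ℝ) < 1 / 2)
    rw [log_inv, inv_rpow ht.le, ← rpow_neg ht.le] at this
    linarith
  have hnonneg : 0 ≤ t ^ (-(1 / 2) : ℝ) := rpow_nonneg ht.le _
  rw [abs_le]
  constructor <;> nlinarith

theorem norm_log_norm_sub_mul_le_indicator {E : Type*} [SeminormedAddCommGroup E] {g : E → ℝ}
    {K R S : ℝ} {x : E} (hgK : ∀ y, |g y| ≤ K)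
    (hg_supp : ∀ y, R < ‖y‖ → g y = 0) (hxS : ‖x‖ + R ≤ S) (y : E) :
    ‖log ‖x - y‖ * g y‖ ≤
      K * (Metric.closedBall (0 : E) S).indicator (fun z => |log ‖z‖|) (x - y) := by
  rcases le_or_gt ‖y‖ R with hy | hy
  · have hmem : x - y ∈ Metric.closedBall (0 : E) S :=
      mem_closedBall_zero_iff.2 ((norm_sub_le x y).trans (by linarith))
    rw [indicator_of_mem hmem, norm_mul, norm_eq_abs, norm_eq_abs, mul_comm K]
    exact mul_le_mul_of_nonneg_left (hgK y) (abs_nonneg _)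
  · rw [hg_supp y hy, mul_zero, norm_zero]
    exact mul_nonneg ((abs_nonneg _).trans (hgK y)) (indicator_nonneg (fun _ _ => abs_nonneg _) _)

section LogKernel

variable {E : Type*} [NormedAddCommGroup E] [NormedSpace ℝ E] [FiniteDimensional ℝ E]
  [MeasurableSpace E] [BorelSpace E] {μ : Measure E} [μ.IsAddHaarMeasure]

theorem integrableOn_closedBall_log_norm (r : ℝ) :
    IntegrableOn (fun z : E => log ‖z‖) (Metric.closedBall 0 r) μ := by
  rcases Nat.eq_zero_or_pos (Module.finrank ℝ E) with hd | hd
  · have : Subsingleton E := Module.finrank_zero_iff.1 hd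
    have hzero : (fun z : E => log ‖z‖) = 0 := by
      ext z; simp [Subsingleton.elim z 0]
    rw [hzero]
    exact integrableOn_zero
  -- `|log ‖z‖| ≲ ‖z‖ ^ (-1/2)` near `0`, and `1/2` is below every positive dimension.
  refine (integrableOn_ball_of_norm_le_rpow (r := r + 1) (C := 2 * (r + 1 + 1)) hd
    (α := 1 / 2) ?_ ?_ ?_).mono_set (Metric.closedBall_subset_ball (lt_add_one r))
  · have : (1 : ℝ) ≤ Module.finrank ℝ E := by exact_mod_cast hd
    linarith
  · refine ae_restrict_of_forall_mem measurableSet_ball fun z hz => ?_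
    rw [norm_eq_abs]
    exact abs_log_le_mul_rpow_neg_half (norm_nonneg z) (mem_ball_zero_iff.1 hz).le
  · exact (measurable_log.comp measurable_norm).aestronglyMeasurable

theorem integrable_indicator_abs_log_norm_comp_sub (S : ℝ) (x : E) :
    Integrable (fun y => (Metric.closedBall (0 : E) S).indicator (fun z => |log ‖z‖|) (x - y)) μ :=
  ((integrable_indicator_iff measurableSet_closedBall).2
    (integrableOn_closedBall_log_norm S).abs).comp_sub_left x

variable {g : E → ℝ} {K R S : ℝ} {x : E}

theorem integrable_log_norm_sub_mul (hg : AEStronglyMeasurable g μ) (hgK : ∀ y, |g y| ≤ K)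
    (hg_supp : ∀ y, R < ‖y‖ → g y = 0) (hxS : ‖x‖ + R ≤ S) :
    Integrable (fun y => log ‖x - y‖ * g y) μ :=
  ((integrable_indicator_abs_log_norm_comp_sub S x).const_mul K).mono'
    ((measurable_log.comp (measurable_const.sub measurable_id).norm).aestronglyMeasurable.mul hg)
    (Eventually.of_forall (norm_log_norm_sub_mul_le_indicator hgK hg_supp hxS))

theorem abs_integral_log_norm_sub_mul_le (hgK : ∀ y, |g y| ≤ K)
    (hg_supp : ∀ y, R < ‖y‖ → g y = 0) (hxS : ‖x‖ + R ≤ S) :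
    |∫ y, log ‖x - y‖ * g y ∂μ| ≤ K * ∫ z in Metric.closedBall (0 : E) S, |log ‖z‖| ∂μ := by
  calc |∫ y, log ‖x - y‖ * g y ∂μ|
      ≤ ∫ y, K * (Metric.closedBall (0 : E) S).indicator (fun z => |log ‖z‖|) (x - y) ∂μ :=
        norm_integral_le_of_norm_le ((integrable_indicator_abs_log_norm_comp_sub S x).const_mul K)
          (Eventually.of_forall (norm_log_norm_sub_mul_le_indicator hgK hg_supp hxS))
    _ = K * ∫ z in Metric.closedBall (0 : E) S, |log ‖z‖| ∂μ := by
      rw [integral_const_mul, integral_sub_left_eq_self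
        ((Metric.closedBall (0 : E) S).indicator fun z => |log ‖z‖|) μ x,
        integral_indicator measurableSet_closedBall]

end LogKernel

theorem MeasureTheory.Integrable.of_mul_of_one_le_abs {α : Type*} [MeasurableSpace α]
    {μ : Measure α} {h g : α → ℝ} (hhg : Integrable (fun y => h y * g y) μ) (hh : Measurable h)
    (h_one : ∀ᵐ y ∂μ, g y ≠ 0 → 1 ≤ |h y|) : Integrable g μ := by
  have hg_eq : (fun y => h y * g y * (h y)⁻¹) =ᵐ[μ] g := by
    filter_upwards [h_one] with y hy
    rcases eq_or_ne (g y) 0 with hgy | hgy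
    · simp [hgy]
    · have : h y ≠ 0 := fun h0 => by
        have := hy hgy
        rw [h0, abs_zero] at this
        linarith
      field_simp
  refine hhg.mono ((hhg.1.mul hh.inv.aestronglyMeasurable).congr hg_eq) ?_
  filter_upwards [h_one] with y hy
  rcases eq_or_ne (g y) 0 with hgy | hgy
  · simp [hgy]
  · rw [norm_mul, norm_eq_abs (h y)]
    exact le_mul_of_one_le_left (norm_nonneg _) (hy hgy)

section LogPotential

variable {E : Type*} [NormedAddCommGroup E] [MeasurableSpace E]
  {μ : Measure E} {f : E → ℝ} {ε R S : ℝ} {x : E}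

theorem integral_log_mul_norm_sub_mul_le (hε : ε ∈ Ioc 0 1) (hf0 : ∀ y, 0 ≤ f y)
    (hf : Integrable f μ) (hf_supp : ∀ y, R < ‖y‖ → f y = 0) (hx : ‖x‖ ≤ R) :
    ∫ y, log (ε * ‖x - y‖) * f y ∂μ ≤ max 0 (log (2 * R)) * ∫ y, f y ∂μ := by
  by_cases hint : Integrable (fun y => log (ε * ‖x - y‖) * f y) μ
  · rw [← integral_const_mul]
    refine integral_mono hint (hf.const_mul _) fun y => ?_
    rcases le_or_gt ‖y‖ R with hy | hy
    · refine mul_le_mul_of_nonneg_right ?_ (hf0 y)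
      rcases (mul_nonneg hε.1.le (norm_nonneg (x - y))).eq_or_lt with h0 | hpos
      · rw [← h0, log_zero]; exact le_max_left _ _
      · refine (log_le_log hpos ?_).trans (le_max_right _ _)
        calc ε * ‖x - y‖ ≤ 1 * (‖x‖ + ‖y‖) :=
              mul_le_mul hε.2 (norm_sub_le x y) (norm_nonneg _) zero_le_one
          _ ≤ 2 * R := by linarith
    · simp [hf_supp y hy]
  · rw [integral_undef hint]
    exact mul_nonneg (le_max_left _ _) (integral_nonneg hf0)

variable [NullSingletonClass μ]

theorem integral_log_mul_norm_sub_mul (hε : 0 < ε) (hf : Integrable f μ)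
    (hlog : Integrable (fun y => log ‖x - y‖ * f y) μ) :
    ∫ y, log (ε * ‖x - y‖) * f y ∂μ = log ε * ∫ y, f y ∂μ + ∫ y, log ‖x - y‖ * f y ∂μ := by
  rw [← integral_const_mul, ← integral_add (hf.const_mul _) hlog]
  refine integral_congr_ae ?_
  filter_upwards [measure_eq_zero_iff_ae_notMem.1 (measure_singleton x)] with y hy
  rw [log_mul hε.ne' (norm_ne_zero_iff.2 (sub_ne_zero.2 (Ne.symm hy))), add_mul]

theorem not_integrable_log_mul_norm_sub_mul [BorelSpace E] (hε : 0 < ε) (hεS : ε * S ≤ exp (-1))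
    (hf : ¬ Integrable f μ) (hf_supp : ∀ y, R < ‖y‖ → f y = 0) (hxS : ‖x‖ + R ≤ S) :
    ¬ Integrable (fun y => log (ε * ‖x - y‖) * f y) μ := by
  refine fun hint => hf (hint.of_mul_of_one_le_abs ?_ ?_)
  · exact measurable_log.comp
      (continuous_const.mul (continuous_const.sub continuous_id).norm).measurable
  filter_upwards [measure_eq_zero_iff_ae_notMem.1 (measure_singleton x)] with y hyx hfy
  have hy : ‖y‖ ≤ R := not_lt.1 fun hy => hfy (hf_supp y hy)
  have hpos : 0 < ε * ‖x - y‖ :=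
    mul_pos hε (norm_pos_iff.2 (sub_ne_zero.2 (Ne.symm hyx)))
  have hsmall : ε * ‖x - y‖ ≤ exp (-1) :=
    (mul_le_mul_of_nonneg_left ((norm_sub_le x y).trans (by linarith)) hε.le).trans hεS
  have hlog : log (ε * ‖x - y‖) ≤ -1 := by
    simpa using log_le_log hpos hsmall
  rw [abs_of_neg (by linarith)]
  linarith

end LogPotential

section Rescaled

variable {E : Type*}

noncomputable def rescaledDensity (ε : ℝ) (w V : E → ℝ) (y : E) : ℝ :=
  (w y * |log ε|⁻¹ + 1) * V y

variable {c ε M B R S : ℝ} {V w : E → ℝ}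

theorem rescaledDensity_nonneg (hL : 0 < |log ε|) (hV0 : ∀ y, 0 ≤ V y)
    (hw_lower : ∀ x, -|log ε| ≤ w x) (y : E) : 0 ≤ rescaledDensity ε w V y := by
  refine mul_nonneg ?_ (hV0 y)
  have : -1 ≤ w y * |log ε|⁻¹ := by
    rw [← neg_one_mul |log ε|] at hw_lower
    exact (le_mul_inv_iff₀ hL).2 (hw_lower y)
  linarith

variable [NormedAddCommGroup E]

theorem rescaledDensity_eq_zero (hV_supp : ∀ y, R < ‖y‖ → V y = 0) {y : E} (hy : R < ‖y‖) :
    rescaledDensity ε w V y = 0 := by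
  rw [rescaledDensity, hV_supp y hy, mul_zero]

variable [MeasurableSpace E] {μ : Measure E}

theorem abs_rescaledDensity_le (hc : 0 ≤ c) (hε : ε ∈ Ioc 0 1) (hL : 1 ≤ |log ε|)
    (hV0 : ∀ y, 0 ≤ V y) (hVB : ∀ y, V y ≤ B) (hV_supp : ∀ y, R < ‖y‖ → V y = 0)
    (hw : ∀ x, w x = c * ∫ y, log (ε * ‖x - y‖) * rescaledDensity ε w V y ∂μ)
    (hw_lower : ∀ x, -|log ε| ≤ w x) (hf : Integrable (rescaledDensity ε w V) μ)
    (hΛM : |c * ∫ y, rescaledDensity ε w V y ∂μ| ≤ M) (y : E) :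
    |rescaledDensity ε w V y| ≤ (max 0 (log (2 * R)) * M + 1) * B := by
  set A := max 0 (log (2 * R))
  have hf0 := rescaledDensity_nonneg (one_pos.trans_le hL) hV0 hw_lower
  have hA : 0 ≤ A := le_max_left _ _
  have hM : 0 ≤ M := (abs_nonneg _).trans hΛM
  rw [abs_of_nonneg (hf0 y)]
  rcases le_or_gt ‖y‖ R with hy | hy
  · have hwy : w y ≤ A * M := calc
      w y ≤ c * (A * ∫ y, rescaledDensity ε w V y ∂μ) := by
        rw [hw y]
        exact mul_le_mul_of_nonneg_left (integral_log_mul_norm_sub_mul_le hε hf0 hf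
          (fun _ => rescaledDensity_eq_zero hV_supp) hy) hc
      _ = A * (c * ∫ y, rescaledDensity ε w V y ∂μ) := by ring
      _ ≤ A * M := mul_le_mul_of_nonneg_left (le_of_abs_le hΛM) hA
    have hLinv : |log ε|⁻¹ ≤ 1 := inv_le_one_of_one_le₀ hL
    have : w y * |log ε|⁻¹ ≤ A * M := by
      nlinarith [inv_pos.2 (one_pos.trans_le hL), mul_nonneg hA hM]
    exact mul_le_mul (by linarith) (hVB y) (hV0 y) (by positivity)
  · rw [rescaledDensity_eq_zero hV_supp hy]
    exact mul_nonneg (by positivity) ((hV0 y).trans (hVB y))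

variable [NormedSpace ℝ E] [FiniteDimensional ℝ E] [BorelSpace E] [μ.IsAddHaarMeasure]
  [NullSingletonClass μ]

theorem abs_rescaled_solution_add_mass_le {Λ : ℝ} (hc : 0 ≤ c) (hε : ε ∈ Ioo 0 1)
    (hL : 1 ≤ |log ε|) (hεS : ε * S ≤ exp (-1))
    (hV0 : ∀ y, 0 ≤ V y) (hVB : ∀ y, V y ≤ B) (hV_supp : ∀ y, R < ‖y‖ → V y = 0)
    (hΛ : Λ = c * ∫ y, (w y * |log ε|⁻¹ + 1) * V y ∂μ)
    (hw : ∀ x, w x = c * ∫ y, log (ε * ‖x - y‖) * (w y * |log ε|⁻¹ + 1) * V y ∂μ)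
    (hw_lower : ∀ x, -|log ε| ≤ w x) (hΛM : |Λ| ≤ M) {x : E} (hxS : ‖x‖ + R ≤ S) :
    |w x * |log ε|⁻¹ + Λ| ≤
      c * ((max 0 (log (2 * R)) * M + 1) * B) *
        (∫ z in Metric.closedBall (0 : E) S, |log ‖z‖| ∂μ) / |log ε| := by
  set f := rescaledDensity ε w V
  have hf_supp : ∀ y, R < ‖y‖ → f y = 0 := fun _ => rescaledDensity_eq_zero hV_supp
  have hw' : ∀ x, w x = c * ∫ y, log (ε * ‖x - y‖) * f y ∂μ := fun x => by
    simp only [hw x, f, rescaledDensity, mul_assoc]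
  have hΛ' : Λ = c * ∫ y, f y ∂μ := hΛ
  set L := |log ε| with hL_def
  have hLpos : 0 < L := one_pos.trans_le hL
  by_cases hf : Integrable f μ
  · have hfK := abs_rescaledDensity_le hc (Ioo_subset_Ioc_self hε) hL hV0 hVB hV_supp hw'
      hw_lower hf (hΛ' ▸ hΛM)
    have hsplit : w x * L⁻¹ + Λ = c * L⁻¹ * ∫ y, log ‖x - y‖ * f y ∂μ := by
      rw [hw' x, integral_log_mul_norm_sub_mul hε.1 hf
          (integrable_log_norm_sub_mul hf.1 hfK hf_supp hxS), hΛ',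
        show log ε = -L by rw [hL_def, abs_of_neg (log_neg hε.1 hε.2), neg_neg]]
      field_simp
      ring
    rw [hsplit, abs_mul, abs_of_nonneg (by positivity : 0 ≤ c * L⁻¹)]
    calc c * L⁻¹ * |∫ y, log ‖x - y‖ * f y ∂μ|
        ≤ c * L⁻¹ * (_ * ∫ z in Metric.closedBall (0 : E) S, |log ‖z‖| ∂μ) :=
          mul_le_mul_of_nonneg_left (abs_integral_log_norm_sub_mul_le hfK hf_supp hxS)
            (by positivity)
      _ = _ := by ring
  -- Both integrals then take the junk value `0`.
  · have hΛ0 : Λ = 0 := by rw [hΛ', integral_undef hf, mul_zero]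
    have hw0 : w x = 0 := by
      rw [hw' x, integral_undef (not_integrable_log_mul_norm_sub_mul hε.1 hεS hf hf_supp hxS),
        mul_zero]
    have hB : 0 ≤ B := (hV0 0).trans (hVB 0)
    have hM : 0 ≤ M := (abs_nonneg Λ).trans hΛM
    have hJ : 0 ≤ ∫ z in Metric.closedBall (0 : E) S, |log ‖z‖| ∂μ :=
      setIntegral_nonneg measurableSet_closedBall fun _ _ => abs_nonneg _
    rw [hΛ0, hw0, zero_mul, add_zero, abs_zero]
    positivity

end Rescaled

theorem stmt14_general
    (R₀ τ : ℝ) (hτ : 0 < τ)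
    (V : EuclideanSpace ℝ (Fin 2) → ℝ)
    (hVcont : Continuous V) (hVnonneg : ∀ x, 0 ≤ V x)
    (hVsupp : ∀ x, R₀ < ‖x‖ → V x = 0)
    (u : ℝ → EuclideanSpace ℝ (Fin 2) → ℝ)
    (Λ : ℝ → ℝ)
    (hΛ : ∀ ε ∈ Set.Ioo (0 : ℝ) 1,
      Λ ε = (τ / (2 * Real.pi)) * ∫ y, (u ε (ε • y) * |Real.log ε|⁻¹ + 1) * V y)
    (heq : ∀ ε ∈ Set.Ioo (0 : ℝ) 1, ∀ x,
      u ε (ε • x) = (τ / (2 * Real.pi)) *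
        ∫ y, Real.log (ε * ‖x - y‖) * (u ε (ε • y) * |Real.log ε|⁻¹ + 1) * V y)
    (hlower : ∀ ε ∈ Set.Ioo (0 : ℝ) 1, ∀ x, -|Real.log ε| ≤ u ε x)
    (hbdd : ∃ M : ℝ, ∀ ε ∈ Set.Ioo (0 : ℝ) 1, |Λ ε| ≤ M) :
    ∀ k : ℝ, 0 < k → ∀ δ : ℝ, 0 < δ →
      ∀ᶠ ε in nhdsWithin (0 : ℝ) (Set.Ioo (0 : ℝ) 1),
        ∀ x : EuclideanSpace ℝ (Fin 2), ‖x‖ ≤ k →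
          |u ε (ε • x) * |Real.log ε|⁻¹ + Λ ε| < δ := by
  obtain ⟨M, hM⟩ := hbdd
  obtain ⟨B, hB⟩ : ∃ B, ∀ y, V y ≤ B := by
    have hV : HasCompactSupport V :=
      HasCompactSupport.intro (isCompact_closedBall 0 R₀) fun y hy => hVsupp y (by simpa using hy)
    obtain ⟨B, hB⟩ := hV.exists_bound_of_continuous hVcont
    exact ⟨B, fun y => (le_abs_self _).trans (hB y)⟩
  intro k hk δ hδ
  set K := τ / (2 * π) * ((max 0 (log (2 * R₀)) * M + 1) * B) *
    ∫ z in Metric.closedBall (0 : EuclideanSpace ℝ (Fin 2)) (k + R₀), |log ‖z‖|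
  have hlog : Tendsto (fun ε => |log ε|) (𝓝[Ioo 0 1] 0) atTop :=
    (tendsto_abs_atBot_atTop.comp tendsto_log_nhdsGT_zero).mono_left
      (nhdsWithin_mono _ Ioo_subset_Ioi_self)
  have hsmall : ∀ᶠ ε in 𝓝[Ioo 0 1] 0, ε * (k + R₀) < exp (-1) :=
    ((tendsto_id.mul_const (k + R₀)).mono_left nhdsWithin_le_nhds).eventually_lt_const
      (by simpa using exp_pos (-1))
  filter_upwards [self_mem_nhdsWithin, hlog.eventually_ge_atTop 1,
    hlog.eventually_gt_atTop (K / δ), hsmall] with ε hε hL hLK hεS x hx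
  calc |u ε (ε • x) * |log ε|⁻¹ + Λ ε| ≤ K / |log ε| :=
        abs_rescaled_solution_add_mass_le (w := fun z => u ε (ε • z)) (by positivity) hε hL hεS.le
          hVnonneg hB hVsupp (hΛ ε hε) (heq ε hε) (fun z => hlower ε hε _) (hM ε hε)
          (by linarith)
    _ < δ := by
      rw [div_lt_iff₀ (by linarith)]
      rwa [div_lt_iff₀ hδ, mul_comm] at hLK

/-- Fix `R₀ > 0`, `τ > 0`, and `V ≥ 0` continuous supported in
`B_{R₀}(0)` with `∫ V = 1`. Suppose for each `ε ∈ (0,1)` the function `u ε`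
satisfies the rescaled logarithmic integral equation
`u ε (εx) = (τ/2π) ∫ log (ε ‖x − y‖) (u ε (εy) |log ε|⁻¹ + 1) V y dy`,
that `u ε ≥ −|log ε|`, and that
`Λ ε = (τ/2π) ∫ (u ε (εy) |log ε|⁻¹ + 1) V y dy` stays bounded. Then for every
`k > 0`, `sup_{‖x‖ ≤ k} |u ε (εx) |log ε|⁻¹ + Λ ε| → 0` as `ε → 0⁺`. -/
theorem stmt14
    (R₀ τ : ℝ) (hR₀ : 0 < R₀) (hτ : 0 < τ)
    (V : EuclideanSpace ℝ (Fin 2) → ℝ)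
    (hVcont : Continuous V) (hVnonneg : ∀ x, 0 ≤ V x)
    (hVsupp : ∀ x, R₀ < ‖x‖ → V x = 0)
    (hVint : ∫ x, V x = 1)
    (u : ℝ → EuclideanSpace ℝ (Fin 2) → ℝ)
    (Λ : ℝ → ℝ)
    (hΛ : ∀ ε ∈ Set.Ioo (0 : ℝ) 1,
      Λ ε = (τ / (2 * Real.pi)) * ∫ y, (u ε (ε • y) * |Real.log ε|⁻¹ + 1) * V y)
    (heq : ∀ ε ∈ Set.Ioo (0 : ℝ) 1, ∀ x,
      u ε (ε • x) = (τ / (2 * Real.pi)) *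
        ∫ y, Real.log (ε * ‖x - y‖) * (u ε (ε • y) * |Real.log ε|⁻¹ + 1) * V y)
    (hlower : ∀ ε ∈ Set.Ioo (0 : ℝ) 1, ∀ x, -|Real.log ε| ≤ u ε x)
    (hbdd : ∃ M : ℝ, ∀ ε ∈ Set.Ioo (0 : ℝ) 1, |Λ ε| ≤ M) :
    ∀ k : ℝ, 0 < k → ∀ δ : ℝ, 0 < δ →
      ∀ᶠ ε in nhdsWithin (0 : ℝ) (Set.Ioo (0 : ℝ) 1),
        ∀ x : EuclideanSpace ℝ (Fin 2), ‖x‖ ≤ k →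
          |u ε (ε • x) * |Real.log ε|⁻¹ + Λ ε| < δ :=
  stmt14_general R₀ τ hτ V hVcont hVnonneg hVsupp u Λ hΛ heq hlower hbdd
end

section
/- Under the assumptions of the previous statement, Λ_ε = (τ/2π)(1 − Λ_ε) + o(1) as ε → 0, and hence lim_{ε→0} Λ_ε = τ/(2π + τ); consequently u^ε(εx)|log ε|^{−1} → −τ/(2π+τ) uniformly on compact sets. -/
open MeasureTheory Real Filter Set
open scoped Topology

/-!
Integrating the uniform estimate `u ε (ε y) / |log ε| ≈ -Λ ε` on `supp V` against the probability
density `V` turns the definition of `Λ ε` into `Λ ε = (τ / 2π) (1 - Λ ε) + o(1)`; solving this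
linear relation gives the limit `τ / (2π + τ)`, which then replaces `Λ ε` in the uniform estimate.
The density `(u ε (ε y) / |log ε| + 1) V y` is measurable because of the potential equation:
otherwise every integral in that equation would be the junk value `0`, forcing `u ε = 0`.
-/

section WeightedAverage

variable {α : Type*} [MeasurableSpace α] {μ : Measure α}

theorem aestronglyMeasurable_of_mul_left {h g : α → ℝ} (hh : AEMeasurable h μ)
    (h0 : ∀ᵐ y ∂μ, h y ≠ 0) (hhg : AEStronglyMeasurable (fun y => h y * g y) μ) :
    AEStronglyMeasurable g μ :=
  (hhg.mul hh.inv.aestronglyMeasurable).congr <| by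
    filter_upwards [h0] with y hy
    simp only [Pi.mul_apply, Pi.inv_apply]
    field_simp

theorem abs_integral_mul_sub_le {f V : α → ℝ} {s : Set α} {a δ : ℝ} (hV : Integrable V μ)
    (hV0 : ∀ y, 0 ≤ V y) (hV1 : ∫ y, V y ∂μ = 1) (hVs : ∀ y ∉ s, V y = 0)
    (hfV : AEStronglyMeasurable (fun y => f y * V y) μ) (hf : ∀ y ∈ s, |f y - a| ≤ δ) :
    |∫ y, f y * V y ∂μ - a| ≤ δ := by
  have hbound : ∀ y, ‖f y * V y - a * V y‖ ≤ δ * V y := by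
    intro y
    by_cases hy : y ∈ s
    · rw [← sub_mul, norm_mul, Real.norm_of_nonneg (hV0 y), Real.norm_eq_abs]
      exact mul_le_mul_of_nonneg_right (hf y hy) (hV0 y)
    · simp [hVs y hy]
  have hdiff : Integrable (fun y => f y * V y - a * V y) μ :=
    (hV.const_mul δ).mono' (hfV.sub (hV.const_mul a).aestronglyMeasurable) (ae_of_all _ hbound)
  have hfVint : Integrable (fun y => f y * V y) μ :=
    (hdiff.add (hV.const_mul a)).congr (ae_of_all _ fun y => by simp)
  calc |∫ y, f y * V y ∂μ - a| = ‖∫ y, (f y * V y - a * V y) ∂μ‖ := by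
        rw [integral_sub hfVint (hV.const_mul a), integral_const_mul, hV1, mul_one,
          Real.norm_eq_abs]
    _ ≤ ∫ y, δ * V y ∂μ := norm_integral_le_of_norm_le (hV.const_mul δ) (ae_of_all _ hbound)
    _ = δ := by rw [integral_const_mul, hV1, mul_one]

theorem tendsto_integral_mul_sub {ι : Type*} {l : Filter ι} {f : ι → α → ℝ} {a : ι → ℝ}
    {V : α → ℝ} {s : Set α} (hV : Integrable V μ) (hV0 : ∀ y, 0 ≤ V y)
    (hV1 : ∫ y, V y ∂μ = 1) (hVs : ∀ y ∉ s, V y = 0)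
    (hfV : ∀ᶠ i in l, AEStronglyMeasurable (fun y => f i y * V y) μ)
    (hf : ∀ δ > 0, ∀ᶠ i in l, ∀ y ∈ s, |f i y - a i| < δ) :
    Tendsto (fun i => ∫ y, f i y * V y ∂μ - a i) l (𝓝 0) := by
  rw [Metric.tendsto_nhds]
  intro δ hδ
  filter_upwards [hfV, hf (δ / 2) (half_pos hδ)] with i hmeas hclose
  rw [Real.dist_0_eq_abs]
  exact (abs_integral_mul_sub_le hV hV0 hV1 hVs hmeas fun y hy => (hclose y hy).le).trans_lt
    (half_lt_self hδ)

end WeightedAverage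

section LogPotential

variable {E : Type*} [NormedAddCommGroup E] [NormedSpace ℝ E] [MeasurableSpace E] [BorelSpace E]
  [FiniteDimensional ℝ E] [Nontrivial E] (μ : Measure E) [μ.IsAddHaarMeasure]

theorem ae_log_mul_norm_sub_ne_zero {ε : ℝ} (hε : 0 < ε) (x : E) :
    ∀ᵐ y ∂μ, log (ε * ‖x - y‖) ≠ 0 := by
  refine ae_iff.mpr (measure_mono_null (fun y hy => ?_)
    (measure_union_null (measure_singleton x) (Measure.addHaar_sphere μ x ε⁻¹)))
  simp only [ne_eq, not_not, mem_ofPred_eq, Real.log_eq_zero] at hy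
  rcases hy with h | h | h
  · left
    simpa [hε.ne', sub_eq_zero, eq_comm] using h
  · right
    rw [Metric.mem_sphere, dist_eq_norm, ← norm_sub_rev]
    exact eq_inv_of_mul_eq_one_right h
  · nlinarith [norm_nonneg (x - y)]

theorem aestronglyMeasurable_of_eq_log_potential {ε s c : ℝ} (hε : 0 < ε) {w V : E → ℝ}
    (hV : AEStronglyMeasurable V μ)
    (hw : ∀ x, w x = c * ∫ y, log (ε * ‖x - y‖) * (w y * s + 1) * V y ∂μ) :
    AEStronglyMeasurable (fun y => (w y * s + 1) * V y) μ := by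
  by_contra hG
  have hw0 : ∀ x, w x = 0 := by
    intro x
    rw [hw x, integral_undef, mul_zero]
    intro hint
    refine hG (aestronglyMeasurable_of_mul_left ?_ (ae_log_mul_norm_sub_ne_zero μ hε x) ?_)
    · fun_prop
    · simpa only [mul_assoc] using hint.aestronglyMeasurable
  exact hG (by simpa [hw0] using hV)

end LogPotential

theorem tendsto_of_tendsto_sub_mul_one_sub {ι : Type*} {l : Filter ι} {Λ : ι → ℝ} {c : ℝ}
    (hc : 1 + c ≠ 0) (h : Tendsto (fun i => Λ i - c * (1 - Λ i)) l (𝓝 0)) :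
    Tendsto Λ l (𝓝 (c / (1 + c))) := by
  have := (h.add_const c).div_const (1 + c)
  rw [zero_add] at this
  refine this.congr fun i => ?_
  field_simp
  ring

theorem eventually_abs_add_lt_of_tendsto {ι X : Type*} {l : Filter ι} {F : ι → X → ℝ}
    {Λ : ι → ℝ} {L : ℝ} {P : X → Prop} (hF : ∀ δ > 0, ∀ᶠ i in l, ∀ x, P x → |F i x + Λ i| < δ)
    (hΛ : Tendsto Λ l (𝓝 L)) (δ : ℝ) (hδ : 0 < δ) :
    ∀ᶠ i in l, ∀ x, P x → |F i x + L| < δ := by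
  filter_upwards [hF (δ / 2) (half_pos hδ), Metric.tendsto_nhds.mp hΛ (δ / 2) (half_pos hδ)]
    with i hFi hΛi x hx
  rw [Real.dist_eq] at hΛi
  calc |F i x + L| = |(F i x + Λ i) - (Λ i - L)| := by ring_nf
    _ ≤ |F i x + Λ i| + |Λ i - L| := abs_sub _ _
    _ < δ / 2 + δ / 2 := add_lt_add (hFi x hx) hΛi
    _ = δ := add_halves δ

theorem stmt15_general
    (R₀ τ : ℝ) (hR₀ : 0 < R₀) (hτ : 0 < τ)
    (V : EuclideanSpace ℝ (Fin 2) → ℝ)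
    (hVcont : Continuous V) (hVnonneg : ∀ x, 0 ≤ V x)
    (hVsupp : ∀ x, R₀ < ‖x‖ → V x = 0)
    (hVint : ∫ x, V x = 1)
    (u : ℝ → EuclideanSpace ℝ (Fin 2) → ℝ)
    (Λ : ℝ → ℝ)
    (hΛ : ∀ ε ∈ Set.Ioo (0 : ℝ) 1,
      Λ ε = (τ / (2 * Real.pi)) * ∫ y, (u ε (ε • y) * |Real.log ε|⁻¹ + 1) * V y)
    (heq : ∀ ε ∈ Set.Ioo (0 : ℝ) 1, ∀ x,
      u ε (ε • x) = (τ / (2 * Real.pi)) *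
        ∫ y, Real.log (ε * ‖x - y‖) * (u ε (ε • y) * |Real.log ε|⁻¹ + 1) * V y)
    (hsup : ∀ k : ℝ, 0 < k → ∀ δ : ℝ, 0 < δ →
      ∀ᶠ ε in nhdsWithin (0 : ℝ) (Set.Ioo (0 : ℝ) 1),
        ∀ x : EuclideanSpace ℝ (Fin 2), ‖x‖ ≤ k →
          |u ε (ε • x) * |Real.log ε|⁻¹ + Λ ε| < δ) :
    Filter.Tendsto (fun ε => Λ ε - (τ / (2 * Real.pi)) * (1 - Λ ε))
        (nhdsWithin (0 : ℝ) (Set.Ioo (0 : ℝ) 1)) (nhds 0) ∧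
    Filter.Tendsto Λ (nhdsWithin (0 : ℝ) (Set.Ioo (0 : ℝ) 1))
        (nhds (τ / (2 * Real.pi + τ))) ∧
    (∀ k : ℝ, 0 < k → ∀ δ : ℝ, 0 < δ →
      ∀ᶠ ε in nhdsWithin (0 : ℝ) (Set.Ioo (0 : ℝ) 1),
        ∀ x : EuclideanSpace ℝ (Fin 2), ‖x‖ ≤ k →
          |u ε (ε • x) * |Real.log ε|⁻¹ + τ / (2 * Real.pi + τ)| < δ) := by
  have hVintg : Integrable V :=
    hVcont.integrable_of_hasCompactSupport <| HasCompactSupport.intro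
      (isCompact_closedBall 0 R₀) fun y hy => hVsupp y (by simpa using hy)
  have hclose : Tendsto (fun ε => (∫ y, (u ε (ε • y) * |log ε|⁻¹ + 1) * V y) - (1 - Λ ε))
      (𝓝[Ioo 0 1] 0) (𝓝 0) :=
    tendsto_integral_mul_sub (s := {y | ‖y‖ ≤ R₀}) (a := fun ε => 1 - Λ ε)
      (f := fun ε y => u ε (ε • y) * |log ε|⁻¹ + 1) hVintg hVnonneg hVint
      (fun y hy => hVsupp y (not_le.mp hy))
      (eventually_mem_nhdsWithin.mono fun ε hε => aestronglyMeasurable_of_eq_log_potential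
        volume hε.1 (w := fun y => u ε (ε • y)) hVcont.aestronglyMeasurable (heq ε hε))
      fun δ hδ => (hsup R₀ hR₀ δ hδ).mono fun ε h y hy => by
        convert h y hy using 2
        ring
  have hrel : Tendsto (fun ε => Λ ε - τ / (2 * π) * (1 - Λ ε)) (𝓝[Ioo 0 1] 0) (𝓝 0) := by
    have h := hclose.const_mul (τ / (2 * π))
    rw [mul_zero] at h
    refine h.congr' (eventually_mem_nhdsWithin.mono fun ε hε => ?_)
    dsimp only
    rw [hΛ ε hε]
    ring
  have hlim : Tendsto Λ (𝓝[Ioo 0 1] 0) (𝓝 (τ / (2 * π + τ))) := by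
    convert tendsto_of_tendsto_sub_mul_one_sub (by positivity) hrel using 2
    field_simp
  exact ⟨hrel, hlim, fun k hk => eventually_abs_add_lt_of_tendsto (hsup k hk) hlim⟩

/-- In the setup of the previous statement (and given the uniform
convergence `sup_{‖x‖≤k} |u ε (εx)|log ε|⁻¹ + Λ ε| → 0`), one has
`Λ ε = (τ/2π)(1 − Λ ε) + o(1)` as `ε → 0⁺`, hence `Λ ε → τ/(2π + τ)`;
consequently `u ε (εx) |log ε|⁻¹ → −τ/(2π + τ)` uniformly on compact sets. -/
theorem stmt15
    (R₀ τ : ℝ) (hR₀ : 0 < R₀) (hτ : 0 < τ)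
    (V : EuclideanSpace ℝ (Fin 2) → ℝ)
    (hVcont : Continuous V) (hVnonneg : ∀ x, 0 ≤ V x)
    (hVsupp : ∀ x, R₀ < ‖x‖ → V x = 0)
    (hVint : ∫ x, V x = 1)
    (u : ℝ → EuclideanSpace ℝ (Fin 2) → ℝ)
    (Λ : ℝ → ℝ)
    (hΛ : ∀ ε ∈ Set.Ioo (0 : ℝ) 1,
      Λ ε = (τ / (2 * Real.pi)) * ∫ y, (u ε (ε • y) * |Real.log ε|⁻¹ + 1) * V y)
    (heq : ∀ ε ∈ Set.Ioo (0 : ℝ) 1, ∀ x,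
      u ε (ε • x) = (τ / (2 * Real.pi)) *
        ∫ y, Real.log (ε * ‖x - y‖) * (u ε (ε • y) * |Real.log ε|⁻¹ + 1) * V y)
    (hlower : ∀ ε ∈ Set.Ioo (0 : ℝ) 1, ∀ x, -|Real.log ε| ≤ u ε x)
    (hbdd : ∃ M : ℝ, ∀ ε ∈ Set.Ioo (0 : ℝ) 1, |Λ ε| ≤ M)
    (hsup : ∀ k : ℝ, 0 < k → ∀ δ : ℝ, 0 < δ →
      ∀ᶠ ε in nhdsWithin (0 : ℝ) (Set.Ioo (0 : ℝ) 1),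
        ∀ x : EuclideanSpace ℝ (Fin 2), ‖x‖ ≤ k →
          |u ε (ε • x) * |Real.log ε|⁻¹ + Λ ε| < δ) :
    Filter.Tendsto (fun ε => Λ ε - (τ / (2 * Real.pi)) * (1 - Λ ε))
        (nhdsWithin (0 : ℝ) (Set.Ioo (0 : ℝ) 1)) (nhds 0) ∧
    Filter.Tendsto Λ (nhdsWithin (0 : ℝ) (Set.Ioo (0 : ℝ) 1))
        (nhds (τ / (2 * Real.pi + τ))) ∧
    (∀ k : ℝ, 0 < k → ∀ δ : ℝ, 0 < δ →
      ∀ᶠ ε in nhdsWithin (0 : ℝ) (Set.Ioo (0 : ℝ) 1),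
        ∀ x : EuclideanSpace ℝ (Fin 2), ‖x‖ ≤ k →
          |u ε (ε • x) * |Real.log ε|⁻¹ + τ / (2 * Real.pi + τ)| < δ) :=
  stmt15_general R₀ τ hR₀ hτ V hVcont hVnonneg hVsupp hVint u Λ hΛ heq hsup
end

section
/- With u^ε as above, for all z ∈ ℝ² and all x with |x| ≥ max(2|z| + R₀ε, 2R₀ε), |∇u^ε(x+z) − ∇u^ε(x)| ≤ C|z|/|x|². -/
/-!
Writing `k(w) = w / ‖w‖²` for the kernel, the inversion identity
`‖k(b) - k(a)‖ = ‖b - a‖ / (‖a‖ ‖b‖)` gives, for `y` in the support `‖y‖ ≤ R₀ε` of the density,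
`‖k(x + z - y) - k(x - y)‖ = ‖z‖ / (‖x - y‖ ‖x + z - y‖) ≤ 8 ‖z‖ / ‖x‖²`, because the hypotheses on
`‖x‖` keep both distances above `‖x‖ / 4`. Integrating against the density gives the bound with
`C = 8 |τ / 2π| ∫ |density|`.
-/

open MeasureTheory Real

variable {E : Type*} [NormedAddCommGroup E] [InnerProductSpace ℝ E]

lemma norm_div_norm_sq_smul (t : ℝ) (v : E) : ‖(t / ‖v‖ ^ 2) • v‖ = |t| / ‖v‖ := by
  rcases eq_or_ne v 0 with rfl | hv
  · simp
  · have : ‖v‖ ≠ 0 := norm_ne_zero_iff.mpr hv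
    rw [norm_smul, norm_div, norm_pow, norm_norm, Real.norm_eq_abs]
    field_simp

lemma inner_div_norm_sq_smul_self (t : ℝ) {v : E} (hv : v ≠ 0) :
    inner ℝ v ((t / ‖v‖ ^ 2) • v) = t := by
  have : ‖v‖ ≠ 0 := norm_ne_zero_iff.mpr hv
  rw [real_inner_smul_right, real_inner_self_eq_norm_sq]
  field_simp

lemma norm_div_norm_sq_smul_sub_div_norm_sq_smul (t : ℝ) {a b : E} (ha : a ≠ 0) (hb : b ≠ 0) :
    ‖(t / ‖b‖ ^ 2) • b - (t / ‖a‖ ^ 2) • a‖ = |t| * ‖b - a‖ / (‖a‖ * ‖b‖) := by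
  have h := EuclideanGeometry.dist_inversion_inversion (c := (0 : E)) hb ha 1
  simp only [EuclideanGeometry.inversion, dist_eq_norm, sub_zero, vsub_eq_sub, vadd_eq_add,
    add_zero, one_pow, one_div, inv_pow] at h
  simp only [div_eq_mul_inv t, mul_smul, ← smul_sub, norm_smul, h, Real.norm_eq_abs]
  rw [mul_comm ‖b‖ ‖a‖]
  ring

/-- Up to the factor `1 / 2π`, the gradient at `x` of the logarithmic potential
`∫ log ‖x - y‖ f(y) dμ(y)` of the density `f`. -/
noncomputable def logPotentialGrad [MeasurableSpace E] (μ : Measure E) (f : E → ℝ) (x : E) : E :=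
  ∫ y, (f y / ‖x - y‖ ^ 2) • (x - y) ∂μ

section Measure

variable [MeasurableSpace E] [BorelSpace E] [SecondCountableTopology E] {μ : Measure E}

lemma integrable_div_norm_sq_smul_iff {f : E → ℝ} {c : E} {m M : ℝ} (hm : 0 < m)
    (hlo : ∀ y, f y ≠ 0 → m ≤ ‖c - y‖) (hhi : ∀ y, f y ≠ 0 → ‖c - y‖ ≤ M) :
    Integrable (fun y => (f y / ‖c - y‖ ^ 2) • (c - y)) μ ↔ Integrable f μ := by
  have hsub : Continuous fun y : E => c - y := continuous_const.sub continuous_id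
  constructor
  · intro hg
    have hf : f = fun y => inner ℝ (c - y) ((f y / ‖c - y‖ ^ 2) • (c - y)) := by
      funext y
      by_cases hy : f y = 0
      · simp [hy]
      · have : c - y ≠ 0 := norm_pos_iff.mp (hm.trans_le (hlo y hy))
        rw [inner_div_norm_sq_smul_self _ this]
    refine (hg.norm.const_mul M).mono' (hf ▸ hsub.aestronglyMeasurable.inner
      hg.aestronglyMeasurable) (ae_of_all _ fun y => ?_)
    rw [norm_div_norm_sq_smul, Real.norm_eq_abs]
    by_cases hy : f y = 0
    · simp [hy]
    · have hpos : 0 < ‖c - y‖ := hm.trans_le (hlo y hy)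
      rw [mul_div_assoc', le_div_iff₀ hpos, mul_comm M]
      exact mul_le_mul_of_nonneg_left (hhi y hy) (abs_nonneg _)
  · intro hf
    refine (hf.norm.const_mul m⁻¹).mono' ((hf.aestronglyMeasurable.div₀
      (hsub.norm.pow 2).aestronglyMeasurable).smul hsub.aestronglyMeasurable)
      (ae_of_all _ fun y => ?_)
    rw [norm_div_norm_sq_smul, Real.norm_eq_abs]
    by_cases hy : f y = 0
    · simp [hy]
    · rw [← div_eq_inv_mul]
      exact div_le_div_of_nonneg_left (abs_nonneg _) hm (hlo y hy)

lemma norm_logPotentialGrad_add_sub_le {f : E → ℝ} {r : ℝ} (hr : 0 < r)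
    (hf : ∀ y, f y ≠ 0 → ‖y‖ ≤ r) {x z : E} (hxz : 2 * ‖z‖ + r ≤ ‖x‖) (hxr : 2 * r ≤ ‖x‖) :
    ‖logPotentialGrad μ f (x + z) - logPotentialGrad μ f x‖ ≤
      8 * (∫ y, |f y| ∂μ) * ‖z‖ / ‖x‖ ^ 2 := by
  have hx : 0 < ‖x‖ := by linarith
  have hnear : ∀ y, f y ≠ 0 → ‖x‖ / 2 ≤ ‖x - y‖ := fun y hy => by
    linarith [hf y hy, norm_sub_norm_le x y]
  have hfar : ∀ y, f y ≠ 0 → ‖x‖ / 4 ≤ ‖x + z - y‖ := fun y hy => by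
    have : ‖x‖ ≤ ‖x + z‖ + ‖z‖ := by simpa using norm_sub_le (x + z) z
    linarith [hf y hy, norm_sub_norm_le (x + z) y]
  have hbdd : ∀ (c : E) y, f y ≠ 0 → ‖c - y‖ ≤ ‖c‖ + r := fun c y hy =>
    (norm_sub_le c y).trans (by linarith [hf y hy])
  have hint_near := integrable_div_norm_sq_smul_iff (μ := μ) (by positivity) hnear (hbdd x)
  have hint_far := integrable_div_norm_sq_smul_iff (μ := μ) (by positivity) hfar (hbdd (x + z))
  unfold logPotentialGrad
  by_cases hfi : Integrable f μ
  swap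
  · -- junk values: with `f` not integrable, neither are the two vector fields
    rw [integral_undef (hint_far.not.mpr hfi), integral_undef (hint_near.not.mpr hfi)]
    simp only [sub_zero, norm_zero]
    positivity
  have hpointwise : ∀ y, ‖(f y / ‖x + z - y‖ ^ 2) • (x + z - y) - (f y / ‖x - y‖ ^ 2) • (x - y)‖
      ≤ 8 * ‖z‖ / ‖x‖ ^ 2 * |f y| := fun y => by
    by_cases hy : f y = 0
    · simp [hy]
    have hn := hnear y hy
    have hf' := hfar y hy
    rw [norm_div_norm_sq_smul_sub_div_norm_sq_smul _ (norm_pos_iff.mp (by linarith))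
      (norm_pos_iff.mp (by linarith)), show x + z - y - (x - y) = z by abel,
      div_le_iff₀ (by nlinarith), mul_comm |f y|]
    calc 8 * ‖z‖ / ‖x‖ ^ 2 * |f y| * (‖x - y‖ * ‖x + z - y‖)
        ≥ 8 * ‖z‖ / ‖x‖ ^ 2 * |f y| * (‖x‖ / 2 * (‖x‖ / 4)) := by gcongr
      _ = ‖z‖ * |f y| := by field_simp; ring
  rw [← integral_sub (hint_far.mpr hfi) (hint_near.mpr hfi)]
  calc _ ≤ ∫ y, 8 * ‖z‖ / ‖x‖ ^ 2 * |f y| ∂μ :=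
        norm_integral_le_of_norm_le (hfi.abs.const_mul _) (ae_of_all _ hpointwise)
    _ = 8 * (∫ y, |f y| ∂μ) * ‖z‖ / ‖x‖ ^ 2 := by rw [integral_const_mul]; ring

end Measure

lemma norm_le_mul_of_apply_inv_smul_ne_zero {F : Type*} [SeminormedAddCommGroup F]
    [NormedSpace ℝ F] {V : F → ℝ} {R ε : ℝ} (hV : ∀ x, R < ‖x‖ → V x = 0) (hε : 0 < ε) {y : F}
    (hy : V (ε⁻¹ • y) ≠ 0) : ‖y‖ ≤ R * ε := by
  have h := not_lt.mp (mt (hV _) hy)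
  rwa [norm_smul, Real.norm_eq_abs, abs_of_pos (inv_pos.mpr hε), inv_mul_le_iff₀ hε,
    mul_comm] at h

theorem stmt18_general
    (R₀ τ ε : ℝ) (hR₀ : 0 < R₀) (hε : ε ∈ Set.Ioo (0 : ℝ) 1)
    (V : EuclideanSpace ℝ (Fin 2) → ℝ)
    (hVsupp : ∀ x, R₀ < ‖x‖ → V x = 0)
    (u : EuclideanSpace ℝ (Fin 2) → ℝ)
    (hgrad : ∀ x, gradient u x = (τ / (2 * Real.pi)) • ∫ y,
      (((ε ^ 2 * |Real.log ε|)⁻¹ * V (ε⁻¹ • y) * u y + ε⁻¹ ^ 2 * V (ε⁻¹ • y))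
        / ‖x - y‖ ^ 2) • (x - y)) :
    ∃ C : ℝ, ∀ z x : EuclideanSpace ℝ (Fin 2),
      max (2 * ‖z‖ + R₀ * ε) (2 * R₀ * ε) ≤ ‖x‖ →
      ‖gradient u (x + z) - gradient u x‖ ≤ C * ‖z‖ / ‖x‖ ^ 2 := by
  set f := fun y => (ε ^ 2 * |Real.log ε|)⁻¹ * V (ε⁻¹ • y) * u y + ε⁻¹ ^ 2 * V (ε⁻¹ • y)
  have hsupp : ∀ y, f y ≠ 0 → ‖y‖ ≤ R₀ * ε := fun y hy =>
    norm_le_mul_of_apply_inv_smul_ne_zero hVsupp hε.1 fun hV => hy (by simp [f, hV])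
  refine ⟨|τ / (2 * π)| * (8 * ∫ y, |f y|), fun z x hx => ?_⟩
  obtain ⟨hxz, hxr⟩ := max_le_iff.mp hx
  have hgrad' : ∀ x, gradient u x = (τ / (2 * π)) • logPotentialGrad volume f x := hgrad
  calc ‖gradient u (x + z) - gradient u x‖
      = |τ / (2 * π)| * ‖logPotentialGrad volume f (x + z) - logPotentialGrad volume f x‖ := by
        rw [hgrad', hgrad', ← smul_sub, norm_smul, Real.norm_eq_abs]
    _ ≤ |τ / (2 * π)| * (8 * (∫ y, |f y|) * ‖z‖ / ‖x‖ ^ 2) := by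
        gcongr
        exact norm_logPotentialGrad_add_sub_le (mul_pos hR₀ hε.1) hsupp hxz (by linarith)
    _ = |τ / (2 * π)| * (8 * ∫ y, |f y|) * ‖z‖ / ‖x‖ ^ 2 := by ring

/-- With `u = u^ε` as above, whose gradient is the vector potential
`∇u(x) = ∫ (x−y)/‖x−y‖² μ^ε(dy)` of the measure with density
`(τ/2π)(V_ε u + V^ε)` supported in `{‖y‖ ≤ R₀ ε}` and of bounded total mass,
there is a constant `C` such that for all `z ∈ ℝ²` and all `x` with
`‖x‖ ≥ max(2‖z‖ + R₀ε, 2R₀ε)`, `‖∇u(x+z) − ∇u(x)‖ ≤ C ‖z‖ / ‖x‖²`. -/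
theorem stmt18
    (R₀ τ ε : ℝ) (hR₀ : 0 < R₀) (hτ : 0 < τ) (hε : ε ∈ Set.Ioo (0 : ℝ) 1)
    (V : EuclideanSpace ℝ (Fin 2) → ℝ)
    (hVcont : Continuous V) (hVnonneg : ∀ x, 0 ≤ V x)
    (hVsupp : ∀ x, R₀ < ‖x‖ → V x = 0)
    (hVint : ∫ x, V x = 1)
    (u : EuclideanSpace ℝ (Fin 2) → ℝ)
    (hu : ∀ x, u x = (τ / (2 * Real.pi)) * ∫ y, Real.log ‖x - y‖ *
      ((ε ^ 2 * |Real.log ε|)⁻¹ * V (ε⁻¹ • y) * u y + ε⁻¹ ^ 2 * V (ε⁻¹ • y)))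
    (hmass : (τ / (2 * Real.pi)) * (∫ y,
        ((ε ^ 2 * |Real.log ε|)⁻¹ * V (ε⁻¹ • y) * u y + ε⁻¹ ^ 2 * V (ε⁻¹ • y))) ≤ 2)
    (hgrad : ∀ x, gradient u x = (τ / (2 * Real.pi)) • ∫ y,
      (((ε ^ 2 * |Real.log ε|)⁻¹ * V (ε⁻¹ • y) * u y + ε⁻¹ ^ 2 * V (ε⁻¹ • y))
        / ‖x - y‖ ^ 2) • (x - y)) :
    ∃ C : ℝ, ∀ z x : EuclideanSpace ℝ (Fin 2),
      max (2 * ‖z‖ + R₀ * ε) (2 * R₀ * ε) ≤ ‖x‖ →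
      ‖gradient u (x + z) - gradient u x‖ ≤ C * ‖z‖ / ‖x‖ ^ 2 :=
  stmt18_general R₀ τ ε hR₀ hε V hVsupp u hgrad
end
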